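/- Let p ≥ 1 and α_1,…,α_p ∈ [0,1] with α_p > 0, and suppose the greatest common divisor of {i ∈ {1,…,p} : α_i > 0} equals 1. Let r = ρ(A) and let Π = u vᵀ be the rank-one matrix formed from the explicit right and left Perron eigenvectors u, v with uᵀv = 1. Then there exist constants c > 0 and 0 < ρ₀ < 1 such that for all n ∈ ℕ, ‖r^{−n} A^n − Π‖ ≤ c ρ₀^n, where ‖·‖ is the operator norm. -/

import Mathlib

open Matrix Filter

noncomputable section

/-- The companion matrix with first row `(α_1, …, α_p)` and subdiagonal entries `1`. -/
def companion (p : ℕ) (α : Fin p → ℝ) : Matrix (Fin p) (Fin p) ℝ :=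
  Matrix.of fun i j => if (i : ℕ) = 0 then α j else if (i : ℕ) = (j : ℕ) + 1 then 1 else 0

/-- The spectral radius of a real matrix: the maximum (supremum) of the moduli of its
complex eigenvalues. -/
def specRad {p : ℕ} (A : Matrix (Fin p) (Fin p) ℝ) : ℝ :=
  sSup {r : ℝ | ∃ z ∈ spectrum ℂ (A.map (Complex.ofReal : ℝ → ℂ)), ‖z‖ = r}

/-- The right Perron vector (0-based indices). -/
def perronU (p : ℕ) (r : ℝ) : Fin p → ℝ :=
  fun i => r ^ (-(i : ℤ)) / ∑ k : Fin p, r ^ (-(k : ℤ))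

/-- The left Perron vector (0-based indices). -/
def perronV (p : ℕ) (α : Fin p → ℝ) (r : ℝ) : Fin p → ℝ :=
  fun i => (∑ k : Fin p, r ^ (-(k : ℤ))) /
      (∑ k : Fin p, ((k : ℕ) + 1 : ℝ) * α k * r ^ (-((k : ℕ) + 1 : ℤ))) *
      ∑ ℓ ∈ Finset.univ.filter (fun ℓ : Fin p => i ≤ ℓ),
        α ℓ * r ^ ((i : ℤ) - (ℓ : ℤ) - 1)

/-- The operator norm of a real matrix, i.e. the norm of the induced continuous linear map
on Euclidean space. -/
def opNorm {p : ℕ} (B : Matrix (Fin p) (Fin p) ℝ) : ℝ :=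
  ‖Matrix.toEuclideanCLM (𝕜 := ℝ) B‖

/-!
The nonzero eigenvalues of `A` are the `μ` with `∑ α_k μ^{-(k+1)} = 1`. Since
`t ↦ ∑ α_k t^(k+1)` is strictly increasing on `[0, ∞)`, its positive root `r⁻¹` makes `r` the
eigenvalue of largest modulus. An eigenvalue `μ` with `|μ| = r` turns the triangle inequality
for `∑ α_k μ^{-(k+1)}` into an equality, so `μ / r` is a root of unity whose order divides every
`k + 1` with `α_k > 0`; the gcd condition forces `μ = r`.

As `Au = ru`, `vᵀA = rvᵀ` and `vᵀu = 1`, the matrix `B = r⁻¹A - uvᵀ` satisfies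
`Bⁿ = r⁻ⁿAⁿ - uvᵀ` for `n ≥ 1`. If `Bx = μx` with `μ ≠ 0`, then `vᵀx = 0` and `Ax = rμx`;
the eigenspace of `r` is spanned by `u`, so `μ ≠ 1` and `|μ| < 1`. Hence `B` has spectral
radius `< 1`, and Gelfand's formula gives the geometric rate.
-/

open scoped NNReal

theorem Matrix.mem_spectrum_iff_exists_mulVec_eq_smul {K n : Type*} [Field K] [Fintype n]
    [DecidableEq n] {M : Matrix n n K} {μ : K} :
    μ ∈ spectrum K M ↔ ∃ x ≠ 0, M *ᵥ x = μ • x := by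
  rw [← Matrix.spectrum_toLin', ← Module.End.hasEigenvalue_iff_mem_spectrum,
    Module.End.hasEigenvalue_iff, Submodule.ne_bot_iff]
  simp only [Module.End.mem_eigenspace_iff, Matrix.toLin'_apply]
  tauto

theorem sub_pow_succ_of_mul_eq_of_mul_eq {R : Type*} [Ring R] {a e : R} (hae : a * e = e)
    (hea : e * a = e) (he : IsIdempotentElem e) (n : ℕ) :
    (a - e) ^ (n + 1) = a ^ (n + 1) - e := by
  have hpow : ∀ m : ℕ, a ^ m * e = e := fun m => by
    induction m with
    | zero => rw [pow_zero, one_mul]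
    | succ m ih => rw [pow_succ', mul_assoc, ih, hae]
  induction n with
  | zero => rw [zero_add, pow_one, pow_one]
  | succ n ih =>
    rw [pow_succ, ih, sub_mul, mul_sub, mul_sub, ← pow_succ, hpow, hea, he.eq]
    abel

theorem spectrum.eventually_norm_pow_le_of_spectralRadius_lt {A : Type*} [NormedRing A]
    [NormedAlgebra ℂ A] [CompleteSpace A] (a : A) {ρ : ℝ≥0} (h : spectralRadius ℂ a < ρ) :
    ∀ᶠ n in atTop, ‖a ^ n‖ ≤ ρ ^ n := by
  filter_upwards [(pow_nnnorm_pow_one_div_tendsto_nhds_spectralRadius a).eventually_lt_const h,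
    eventually_ge_atTop 1] with n hn hn1
  have hpow := ENNReal.rpow_le_rpow hn.le (z := (n : ℝ)) (by positivity)
  rw [← ENNReal.rpow_mul, one_div_mul_cancel (by positivity), ENNReal.rpow_one,
    ENNReal.rpow_natCast] at hpow
  exact_mod_cast hpow

theorem exists_pos_forall_le_mul_pow {f : ℕ → ℝ} {ρ : ℝ} (hρ : 0 < ρ)
    (h : ∀ᶠ n in atTop, f n ≤ ρ ^ n) : ∃ c > 0, ∀ n, f n ≤ c * ρ ^ n := by
  obtain ⟨N, hN⟩ := eventually_atTop.mp h
  set S := ∑ m ∈ Finset.range N, |f m| / ρ ^ m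
  have hS : 0 ≤ S := Finset.sum_nonneg fun m _ => by positivity
  refine ⟨1 + S, by positivity, fun n => ?_⟩
  rcases lt_or_ge n N with hn | hn
  · have hle : |f n| / ρ ^ n ≤ S :=
      Finset.single_le_sum (f := fun m => |f m| / ρ ^ m) (fun m _ => by positivity)
        (Finset.mem_range.mpr hn)
    rw [div_le_iff₀ (by positivity)] at hle
    nlinarith [le_abs_self (f n), pow_pos hρ n]
  · nlinarith [hN n hn, pow_pos hρ n]

section L2

open scoped Matrix.Norms.L2Operator

theorem EuclideanSpace.norm_toLp_ofReal {n : Type*} [Fintype n] (y : n → ℝ) :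
    ‖WithLp.toLp 2 (fun i => (y i : ℂ))‖ = ‖WithLp.toLp 2 y‖ := by
  simp only [EuclideanSpace.norm_eq, Complex.norm_real]

theorem Matrix.l2_opNorm_le_l2_opNorm_map_ofReal {m n : Type*} [Fintype m] [Fintype n]
    [DecidableEq n] (M : Matrix m n ℝ) : ‖M‖ ≤ ‖M.map (Complex.ofReal : ℝ → ℂ)‖ := by
  rw [Matrix.l2_opNorm_def]
  refine ContinuousLinearMap.opNorm_le_bound _ (norm_nonneg _) fun x => ?_
  have hmap : M.map (Complex.ofReal : ℝ → ℂ) *ᵥ (fun i => (x i : ℂ)) =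
      fun i => ((M *ᵥ x.ofLp) i : ℂ) :=
    funext fun i => (RingHom.map_mulVec Complex.ofRealHom M x.ofLp i).symm
  calc ‖WithLp.toLp 2 (M *ᵥ x.ofLp)‖
      = ‖(EuclideanSpace.equiv m ℂ).symm (M.map Complex.ofReal *ᵥ fun i => (x i : ℂ))‖ := by
        rw [hmap]
        exact (EuclideanSpace.norm_toLp_ofReal _).symm
    _ ≤ ‖M.map Complex.ofReal‖ * ‖WithLp.toLp 2 (fun i => (x i : ℂ))‖ :=
        Matrix.l2_opNorm_mulVec (M.map Complex.ofReal) (WithLp.toLp 2 fun i => (x i : ℂ))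
    _ = ‖M.map Complex.ofReal‖ * ‖x‖ := by rw [EuclideanSpace.norm_toLp_ofReal, WithLp.toLp_ofLp]

theorem exists_eventually_opNorm_pow_le {p : ℕ} (hp : 0 < p) (M : Matrix (Fin p) (Fin p) ℝ)
    (hM : ∀ z ∈ spectrum ℂ (M.map (Complex.ofReal : ℝ → ℂ)), ‖z‖ < 1) :
    ∃ ρ₀ : ℝ, 0 < ρ₀ ∧ ρ₀ < 1 ∧ ∀ᶠ n in atTop, opNorm (M ^ n) ≤ ρ₀ ^ n := by
  have : Nonempty (Fin p) := ⟨⟨0, hp⟩⟩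
  obtain ⟨ρ₀, hMρ₀, hρ₀⟩ := ENNReal.lt_iff_exists_nnreal_btwn.mp
    (spectrum.spectralRadius_lt_of_forall_lt (M.map Complex.ofReal) (r := 1) fun z hz => by
      exact_mod_cast hM z hz)
  refine ⟨ρ₀, NNReal.coe_pos.mpr (ENNReal.coe_pos.mp (pos_of_gt hMρ₀)), by exact_mod_cast hρ₀, ?_⟩
  filter_upwards [spectrum.eventually_norm_pow_le_of_spectralRadius_lt _ hMρ₀] with n hn
  calc opNorm (M ^ n) ≤ ‖(M ^ n).map Complex.ofReal‖ := Matrix.l2_opNorm_le_l2_opNorm_map_ofReal _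
    _ = ‖M.map Complex.ofReal ^ n‖ := congrArg norm (Matrix.map_pow M Complex.ofRealHom n)
    _ ≤ ρ₀ ^ n := by exact_mod_cast hn

end L2

theorem Complex.eq_norm_of_sum_eq_sum_norm {ι : Type*} (s : Finset ι) (z : ι → ℂ)
    (h : ∑ i ∈ s, z i = ∑ i ∈ s, (‖z i‖ : ℂ)) {i : ι} (hi : i ∈ s) : z i = ‖z i‖ := by
  have hre : ∑ j ∈ s, (z j).re = ∑ j ∈ s, ‖z j‖ := by
    simpa only [Complex.re_sum, Complex.ofReal_re] using congrArg Complex.re h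
  have hall := (Finset.sum_eq_sum_iff_of_le fun j _ => Complex.re_le_norm (z j)).mp hre
  exact Complex.eq_coe_norm_of_nonneg (Complex.re_eq_norm.mp (hall i hi))

section WeightedPowSum

variable {p : ℕ}

def weightedPowSum {R : Type*} [CommSemiring R] (β : Fin p → R) (t : R) : R :=
  ∑ k, β k * t ^ ((k : ℕ) + 1)

theorem weightedPowSum_eq_mul_dotProduct {R : Type*} [CommSemiring R] (β : Fin p → R) (t : R) :
    weightedPowSum β t = t * (β ⬝ᵥ fun i => t ^ (i : ℕ)) := by
  simp only [weightedPowSum, dotProduct, Finset.mul_sum, pow_succ]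
  exact Finset.sum_congr rfl fun k _ => by ring

variable {α : Fin p → ℝ}

theorem weightedPowSum_ofReal (t : ℝ) :
    weightedPowSum (fun k => (α k : ℂ)) (t : ℂ) = weightedPowSum α t := by
  simp [weightedPowSum]

theorem weightedPowSum_strictMonoOn (hp : 0 < p) (hα : ∀ k, 0 ≤ α k)
    (hαp : 0 < α ⟨p - 1, Nat.sub_lt hp one_pos⟩) : StrictMonoOn (weightedPowSum α) (Set.Ici 0) := by
  intro s hs t ht hst
  refine Finset.sum_lt_sum (fun k _ => ?_) ⟨⟨p - 1, Nat.sub_lt hp one_pos⟩, Finset.mem_univ _, ?_⟩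
  · exact mul_le_mul_of_nonneg_left (pow_le_pow_left₀ hs hst.le _) (hα k)
  · exact mul_lt_mul_of_pos_left (pow_lt_pow_left₀ hst hs (by omega)) hαp

theorem exists_pos_weightedPowSum_eq_one (hp : 0 < p) (hα : ∀ k, 0 ≤ α k)
    (hαp : 0 < α ⟨p - 1, Nat.sub_lt hp one_pos⟩) : ∃ t > 0, weightedPowSum α t = 1 := by
  set last : Fin p := ⟨p - 1, Nat.sub_lt hp one_pos⟩
  set T := max 1 (α last)⁻¹
  have hT : 1 ≤ T := le_max_left _ _
  have hcont : Continuous (weightedPowSum α) := by unfold weightedPowSum; fun_prop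
  have hgT : 1 ≤ weightedPowSum α T := by
    have hlast : α last * T ^ p ≤ weightedPowSum α T := by
      have := Finset.single_le_sum (f := fun k : Fin p => α k * T ^ ((k : ℕ) + 1))
        (fun k _ => mul_nonneg (hα k) (by positivity)) (Finset.mem_univ last)
      rwa [show p - 1 + 1 = p by omega] at this
    calc (1 : ℝ) = α last * (α last)⁻¹ := (mul_inv_cancel₀ hαp.ne').symm
      _ ≤ α last * T ^ p := by
        gcongr
        exact (le_max_right _ _).trans (le_self_pow₀ hT hp.ne')
      _ ≤ weightedPowSum α T := hlast
  obtain ⟨t, ht, hgt⟩ := intermediate_value_Icc (zero_le_one.trans hT) hcont.continuousOn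
    ⟨by simp [weightedPowSum], hgT⟩
  refine ⟨t, lt_of_le_of_ne ht.1 ?_, hgt⟩
  rintro rfl
  simp [weightedPowSum] at hgt

theorem norm_weightedPowSum_le (hα : ∀ k, 0 ≤ α k) (w : ℂ) :
    ‖weightedPowSum (fun k => (α k : ℂ)) w‖ ≤ weightedPowSum α ‖w‖ := by
  refine (norm_sum_le _ _).trans_eq (Finset.sum_congr rfl fun k _ => ?_)
  rw [norm_mul, norm_pow, Complex.norm_real, Real.norm_of_nonneg (hα k)]

theorem le_norm_of_weightedPowSum_eq_one (hp : 0 < p) (hα : ∀ k, 0 ≤ α k)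
    (hαp : 0 < α ⟨p - 1, Nat.sub_lt hp one_pos⟩) {t : ℝ} (ht : 0 ≤ t) (htα : weightedPowSum α t = 1)
    {w : ℂ} (hw : weightedPowSum (fun k => (α k : ℂ)) w = 1) : t ≤ ‖w‖ := by
  have hle : weightedPowSum α t ≤ weightedPowSum α ‖w‖ := by
    simpa [htα, hw] using norm_weightedPowSum_le hα w
  exact ((weightedPowSum_strictMonoOn hp hα hαp).le_iff_le ht (norm_nonneg w)).mp hle

theorem eq_of_weightedPowSum_eq_one_of_norm_eq (hα : ∀ k, 0 ≤ α k)
    (hgcd : (Finset.univ.filter fun i : Fin p => 0 < α i).gcd (fun i => (i : ℕ) + 1) = 1)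
    {t : ℝ} (ht : 0 < t) (htα : weightedPowSum α t = 1)
    {w : ℂ} (hw : weightedPowSum (fun k => (α k : ℂ)) w = 1) (hwt : ‖w‖ = t) : w = t := by
  have hterm : ∀ k, (α k : ℂ) * w ^ ((k : ℕ) + 1) = (α k : ℂ) * (t : ℂ) ^ ((k : ℕ) + 1) := by
    intro k
    refine (Complex.eq_norm_of_sum_eq_sum_norm Finset.univ
      (fun k => (α k : ℂ) * w ^ ((k : ℕ) + 1)) ?_ (Finset.mem_univ k)).trans ?_
    · simp only [norm_mul, norm_pow, Complex.norm_real, Real.norm_of_nonneg (hα _), hwt]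
      rw [← weightedPowSum, hw]
      exact_mod_cast htα.symm
    · simp [norm_pow, Complex.norm_real, Real.norm_of_nonneg (hα k), hwt]
  have hζ : ∀ k ∈ Finset.univ.filter fun i : Fin p => 0 < α i,
      (w / t) ^ ((k : ℕ) + 1) = 1 := by
    intro k hk
    have hαk : (α k : ℂ) ≠ 0 := by exact_mod_cast (Finset.mem_filter.mp hk).2.ne'
    rw [div_pow, mul_left_cancel₀ hαk (hterm k),
      div_self (pow_ne_zero _ (by exact_mod_cast ht.ne'))]
  have horder : orderOf (w / t) ∣ 1 :=
    hgcd ▸ Finset.dvd_gcd fun k hk => orderOf_dvd_of_pow_eq_one (hζ k hk)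
  rw [← div_eq_one_iff_eq (by exact_mod_cast ht.ne')]
  exact orderOf_eq_one_iff.mp (Nat.dvd_one.mp horder)

end WeightedPowSum

section CompanionMatrix

variable {K : Type*} [Field K] {p : ℕ}

def companionMatrix (β : Fin p → K) : Matrix (Fin p) (Fin p) K :=
  Matrix.of fun i j => if (i : ℕ) = 0 then β j else if (i : ℕ) = (j : ℕ) + 1 then 1 else 0

theorem companion_eq_companionMatrix (α : Fin p → ℝ) : companion p α = companionMatrix α := rfl

theorem companion_map_ofReal (α : Fin p → ℝ) :
    (companion p α).map (Complex.ofReal : ℝ → ℂ) = companionMatrix fun k => (α k : ℂ) := by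
  ext i j
  simp only [companion, companionMatrix, Matrix.map_apply, Matrix.of_apply]
  split_ifs <;> simp

variable (β : Fin p → K) (x : Fin p → K)

theorem companionMatrix_mulVec_zero (hp : 0 < p) :
    (companionMatrix β *ᵥ x) ⟨0, hp⟩ = β ⬝ᵥ x := by
  simp [companionMatrix, Matrix.mulVec, dotProduct]

theorem companionMatrix_mulVec_succ {i : ℕ} (hi : i + 1 < p) :
    (companionMatrix β *ᵥ x) ⟨i + 1, hi⟩ = x ⟨i, by omega⟩ := by
  have hrow : ∀ j : Fin p, (i = (j : ℕ)) ↔ j = ⟨i, by omega⟩ := fun j => by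
    simp [Fin.ext_iff, eq_comm]
  simp [companionMatrix, Matrix.mulVec, dotProduct, hrow]

theorem vecMul_companionMatrix (hp : 0 < p) (j : Fin p) :
    (x ᵥ* companionMatrix β) j =
      x ⟨0, hp⟩ * β j + if h : (j : ℕ) + 1 < p then x ⟨(j : ℕ) + 1, h⟩ else 0 := by
  have hterm : ∀ i : Fin p, x i * companionMatrix β i j =
      (if i = ⟨0, hp⟩ then x i * β j else 0) + (if (i : ℕ) = (j : ℕ) + 1 then x i else 0) := by
    intro i
    simp only [companionMatrix, Matrix.of_apply, Fin.ext_iff]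
    split_ifs <;> first | omega | simp
  simp only [Matrix.vecMul, dotProduct, hterm, Finset.sum_add_distrib, Finset.sum_ite_eq',
    Finset.mem_univ, if_true]
  congr 1
  split_ifs with h
  · rw [Finset.sum_eq_single (⟨(j : ℕ) + 1, h⟩ : Fin p)] <;> simp +contextual [Fin.ext_iff]
  · exact Finset.sum_eq_zero fun i _ => if_neg (by omega)

end CompanionMatrix

section CompanionSpectrum

variable {K : Type*} [Field K] {p : ℕ} {β : Fin p → K}

theorem companionMatrix_mulVec_geom (hp : 0 < p) {t : K} (ht : weightedPowSum β t = 1) :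
    companionMatrix β *ᵥ (fun i : Fin p => t ^ (i : ℕ)) = t⁻¹ • fun i : Fin p => t ^ (i : ℕ) := by
  have ht0 : t ≠ 0 := by
    rintro rfl
    simp [weightedPowSum] at ht
  funext ⟨i, hi⟩
  rw [Pi.smul_apply, smul_eq_mul]
  cases i with
  | zero =>
    rw [companionMatrix_mulVec_zero β _ hp, pow_zero, mul_one]
    exact eq_inv_of_mul_eq_one_right (by rw [← weightedPowSum_eq_mul_dotProduct, ht])
  | succ i =>
    rw [companionMatrix_mulVec_succ β _ hi, pow_succ', inv_mul_cancel_left₀ ht0]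

theorem companionMatrix_eigenvector_eq_smul (hp : 0 < p) {μ : K} (hμ : μ ≠ 0) {x : Fin p → K}
    (hx : companionMatrix β *ᵥ x = μ • x) : x = x ⟨0, hp⟩ • fun i : Fin p => μ⁻¹ ^ (i : ℕ) := by
  funext ⟨i, hi⟩
  rw [Pi.smul_apply, smul_eq_mul]
  induction i with
  | zero => simp
  | succ i ih =>
    have hrow := congrFun hx ⟨i + 1, hi⟩
    rw [companionMatrix_mulVec_succ β x hi, ih (by omega), Pi.smul_apply, smul_eq_mul] at hrow
    calc x ⟨i + 1, hi⟩ = μ⁻¹ * (μ * x ⟨i + 1, hi⟩) := (inv_mul_cancel_left₀ hμ _).symm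
      _ = x ⟨0, hp⟩ * μ⁻¹ ^ (i + 1) := by rw [← hrow, pow_succ']; ring

theorem companionMatrix_mulVec_eq_zero (hp : 0 < p) (hβ : β ⟨p - 1, Nat.sub_lt hp one_pos⟩ ≠ 0)
    {x : Fin p → K} (hx : companionMatrix β *ᵥ x = 0) : x = 0 := by
  have hlow : ∀ i : Fin p, (i : ℕ) + 1 < p → x i = 0 := fun i hi => by
    rw [← companionMatrix_mulVec_succ β x hi, hx, Pi.zero_apply]
  have hlast : x ⟨p - 1, Nat.sub_lt hp one_pos⟩ = 0 := by
    have h0 := companionMatrix_mulVec_zero β x hp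
    rw [hx, Pi.zero_apply, dotProduct, Finset.sum_eq_single ⟨p - 1, Nat.sub_lt hp one_pos⟩] at h0
    · exact (mul_eq_zero.mp h0.symm).resolve_left hβ
    · intro j _ hj
      simp only [Ne, Fin.ext_iff] at hj
      rw [hlow j (by omega), mul_zero]
    · simp
  funext i
  by_cases hi : (i : ℕ) + 1 < p
  · exact hlow i hi
  · rw [show i = ⟨p - 1, Nat.sub_lt hp one_pos⟩ by ext; simp; omega, hlast, Pi.zero_apply]

theorem mem_spectrum_companionMatrix_iff (hp : 0 < p) (hβ : β ⟨p - 1, Nat.sub_lt hp one_pos⟩ ≠ 0)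
    {μ : K} :
    μ ∈ spectrum K (companionMatrix β) ↔ μ ≠ 0 ∧ weightedPowSum β μ⁻¹ = 1 := by
  rw [Matrix.mem_spectrum_iff_exists_mulVec_eq_smul]
  constructor
  · rintro ⟨x, hx0, hx⟩
    have hμ : μ ≠ 0 := by
      rintro rfl
      exact hx0 (companionMatrix_mulVec_eq_zero hp hβ (by rw [hx, zero_smul]))
    have hgeom := companionMatrix_eigenvector_eq_smul hp hμ hx
    have hx00 : x ⟨0, hp⟩ ≠ 0 := fun h => hx0 (by rw [hgeom, h, zero_smul])
    have hdot : (β ⬝ᵥ fun i : Fin p => μ⁻¹ ^ (i : ℕ)) = μ := by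
      have hrow := companionMatrix_mulVec_zero β x hp
      rw [hx, hgeom, dotProduct_smul] at hrow
      simp only [Pi.smul_apply, smul_eq_mul, pow_zero, mul_one] at hrow
      exact mul_left_cancel₀ hx00 (hrow.symm.trans (mul_comm _ _))
    rw [weightedPowSum_eq_mul_dotProduct, hdot, inv_mul_cancel₀ hμ]
    exact ⟨hμ, rfl⟩
  · rintro ⟨hμ, hβμ⟩
    refine ⟨fun i : Fin p => μ⁻¹ ^ (i : ℕ), fun h => ?_, ?_⟩
    · simpa using congrFun h ⟨0, hp⟩
    · rw [companionMatrix_mulVec_geom hp hβμ, inv_inv]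

end CompanionSpectrum

section CompanionSpectralRadius

variable {p : ℕ} {α : Fin p → ℝ} {r : ℝ}

theorem mem_spectrum_companion_iff (hp : 0 < p) (hαp : 0 < α ⟨p - 1, Nat.sub_lt hp one_pos⟩)
    {z : ℂ} :
    z ∈ spectrum ℂ ((companion p α).map (Complex.ofReal : ℝ → ℂ)) ↔
      z ≠ 0 ∧ weightedPowSum (fun k => (α k : ℂ)) z⁻¹ = 1 := by
  rw [companion_map_ofReal, mem_spectrum_companionMatrix_iff hp (by exact_mod_cast hαp.ne')]

theorem norm_le_of_mem_spectrum_companion (hp : 0 < p) (hα : ∀ k, 0 ≤ α k)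
    (hαp : 0 < α ⟨p - 1, Nat.sub_lt hp one_pos⟩) (hr : 0 < r) (hrα : weightedPowSum α r⁻¹ = 1)
    {z : ℂ} (hz : z ∈ spectrum ℂ ((companion p α).map (Complex.ofReal : ℝ → ℂ))) : ‖z‖ ≤ r := by
  obtain ⟨hz0, hzα⟩ := (mem_spectrum_companion_iff hp hαp).mp hz
  have := le_norm_of_weightedPowSum_eq_one hp hα hαp (inv_nonneg.mpr hr.le) hrα hzα
  rwa [norm_inv, inv_le_inv₀ hr (norm_pos_iff.mpr hz0)] at this

theorem eq_of_mem_spectrum_companion_of_norm_eq (hp : 0 < p) (hα : ∀ k, 0 ≤ α k)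
    (hαp : 0 < α ⟨p - 1, Nat.sub_lt hp one_pos⟩)
    (hgcd : (Finset.univ.filter fun i : Fin p => 0 < α i).gcd (fun i => (i : ℕ) + 1) = 1)
    (hr : 0 < r) (hrα : weightedPowSum α r⁻¹ = 1) {z : ℂ}
    (hz : z ∈ spectrum ℂ ((companion p α).map (Complex.ofReal : ℝ → ℂ))) (hzr : ‖z‖ = r) :
    z = r := by
  obtain ⟨-, hzα⟩ := (mem_spectrum_companion_iff hp hαp).mp hz
  have := eq_of_weightedPowSum_eq_one_of_norm_eq hα hgcd (inv_pos.mpr hr) hrα hzα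
    (by rw [norm_inv, hzr])
  rwa [Complex.ofReal_inv, _root_.inv_inj] at this

theorem specRad_companion (hp : 0 < p) (hα : ∀ k, 0 ≤ α k)
    (hαp : 0 < α ⟨p - 1, Nat.sub_lt hp one_pos⟩)
    (hr : 0 < r) (hrα : weightedPowSum α r⁻¹ = 1) : specRad (companion p α) = r := by
  refine IsGreatest.csSup_eq ⟨⟨r, (mem_spectrum_companion_iff hp hαp).mpr ⟨?_, ?_⟩, ?_⟩, ?_⟩
  · exact_mod_cast hr.ne'
  · rw [← Complex.ofReal_inv, weightedPowSum_ofReal, hrα, Complex.ofReal_one]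
  · simp [hr.le]
  · rintro _ ⟨z, hz, rfl⟩
    exact norm_le_of_mem_spectrum_companion hp hα hαp hr hrα hz

end CompanionSpectralRadius

section PerronVectors

variable {p : ℕ} {α : Fin p → ℝ} {r : ℝ}

theorem perronU_eq_smul :
    perronU p r = (∑ k : Fin p, r⁻¹ ^ (k : ℕ))⁻¹ • fun i : Fin p => r⁻¹ ^ (i : ℕ) := by
  funext i
  simp only [perronU, Pi.smul_apply, smul_eq_mul, _root_.zpow_neg, zpow_natCast, inv_pow]
  rw [div_eq_inv_mul]

theorem companion_mulVec_perronU (hp : 0 < p) (hrα : weightedPowSum α r⁻¹ = 1) :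
    companion p α *ᵥ perronU p r = r • perronU p r := by
  rw [perronU_eq_smul, companion_eq_companionMatrix, Matrix.mulVec_smul,
    companionMatrix_mulVec_geom hp hrα, inv_inv, smul_comm]

-- Indexed by `ℕ` so that it vanishes past the last index, which makes `mul_perronTail` uniform.
variable (α r) in
def perronTail (i : ℕ) : ℝ :=
  ∑ ℓ ∈ Finset.univ.filter (fun ℓ : Fin p => i ≤ (ℓ : ℕ)), α ℓ * r ^ ((i : ℤ) - (ℓ : ℤ) - 1)

theorem perronV_eq_smul :
    perronV p α r = ((∑ k : Fin p, r ^ (-(k : ℤ))) /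
      ∑ k : Fin p, ((k : ℕ) + 1 : ℝ) * α k * r ^ (-((k : ℕ) + 1 : ℤ))) •
        fun i : Fin p => perronTail α r i :=
  rfl

theorem perronTail_zero : perronTail α r 0 = weightedPowSum α r⁻¹ := by
  simp only [perronTail, zero_le, Finset.filter_true, weightedPowSum, Nat.cast_zero]
  refine Finset.sum_congr rfl fun ℓ _ => ?_
  rw [show (0 : ℤ) - ℓ - 1 = -(((ℓ : ℕ) + 1 : ℕ) : ℤ) by push_cast; ring, _root_.zpow_neg,
    zpow_natCast, inv_pow]

theorem mul_perronTail (hr : r ≠ 0) (j : Fin p) :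
    r * perronTail α r j = α j + perronTail α r ((j : ℕ) + 1) := by
  simp only [perronTail, Finset.mul_sum, Finset.sum_filter]
  rw [show α j = ∑ ℓ, if ℓ = j then α ℓ else 0 by simp, ← Finset.sum_add_distrib]
  refine Finset.sum_congr rfl fun ℓ _ => ?_
  rcases lt_trichotomy (ℓ : ℕ) j with h | h | h
  · simp [Fin.ext_iff, h.not_ge, h.ne, show ¬ (j : ℕ) + 1 ≤ ℓ by omega]
  · obtain rfl : ℓ = j := Fin.ext h
    simp [mul_left_comm r, hr]
  · simp only [h.le, if_true, Fin.ext_iff, h.ne', show (j : ℕ) + 1 ≤ ℓ by omega, if_false]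
    push_cast
    rw [show (j : ℤ) + 1 - ℓ - 1 = 1 + ((j : ℤ) - ℓ - 1) by ring, zpow_one_add₀ hr]
    ring

theorem perronTail_eq_zero {i : ℕ} (hi : p ≤ i) : perronTail α r i = 0 :=
  Finset.sum_eq_zero fun ℓ hℓ => absurd (Finset.mem_filter.mp hℓ).2 (by omega)

theorem perronTail_vecMul_companion (hp : 0 < p) (hr : r ≠ 0) (hrα : weightedPowSum α r⁻¹ = 1) :
    (fun i : Fin p => perronTail α r i) ᵥ* companion p α =
      r • fun i : Fin p => perronTail α r i := by
  funext j
  have hnext : (if h : (j : ℕ) + 1 < p then perronTail α r ((j : ℕ) + 1) else 0) =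
      perronTail α r ((j : ℕ) + 1) := by
    split_ifs with h
    · rfl
    · exact (perronTail_eq_zero (by omega)).symm
  rw [companion_eq_companionMatrix, vecMul_companionMatrix _ _ hp, Pi.smul_apply, smul_eq_mul,
    mul_perronTail hr, Fin.val_mk, perronTail_zero, hrα, one_mul, ← hnext]

theorem perronV_vecMul_companion (hp : 0 < p) (hr : r ≠ 0) (hrα : weightedPowSum α r⁻¹ = 1) :
    perronV p α r ᵥ* companion p α = r • perronV p α r := by
  rw [perronV_eq_smul, Matrix.smul_vecMul, perronTail_vecMul_companion hp hr hrα, smul_comm]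

theorem perronTail_dotProduct_zpow (hr : r ≠ 0) :
    (fun i : Fin p => perronTail α r i) ⬝ᵥ (fun i : Fin p => r ^ (-(i : ℤ))) =
      ∑ k : Fin p, ((k : ℕ) + 1 : ℝ) * α k * r ^ (-((k : ℕ) + 1 : ℤ)) := by
  simp only [dotProduct, perronTail, Finset.sum_mul, Finset.sum_filter]
  rw [Finset.sum_comm]
  refine Finset.sum_congr rfl fun ℓ _ => ?_
  have hterm : ∀ i : Fin p,
      (if (i : ℕ) ≤ ℓ then α ℓ * r ^ ((i : ℤ) - ℓ - 1) else 0) * r ^ (-(i : ℤ)) =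
        if i ∈ Finset.Iic ℓ then α ℓ * r ^ (-((ℓ : ℕ) + 1 : ℤ)) else 0 := fun i => by
    simp only [Finset.mem_Iic, Fin.le_def]
    split_ifs
    · rw [mul_assoc, ← zpow_add₀ hr]
      ring_nf
    · rw [zero_mul]
  rw [Finset.sum_congr rfl fun i _ => hterm i, ← Finset.sum_filter, Finset.filter_mem_eq_inter,
    Finset.univ_inter, Finset.sum_const, Fin.card_Iic, nsmul_eq_mul]
  push_cast
  ring

theorem perronV_dotProduct_perronU (hp : 0 < p) (hα : ∀ k, 0 ≤ α k)
    (hαp : 0 < α ⟨p - 1, Nat.sub_lt hp one_pos⟩) (hr : 0 < r) :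
    perronV p α r ⬝ᵥ perronU p r = 1 := by
  have hD : 0 < ∑ k : Fin p, r ^ (-(k : ℤ)) :=
    Finset.sum_pos (fun k _ => zpow_pos hr _) ⟨⟨0, hp⟩, Finset.mem_univ _⟩
  have hE : 0 < ∑ k : Fin p, ((k : ℕ) + 1 : ℝ) * α k * r ^ (-((k : ℕ) + 1 : ℤ)) :=
    Finset.sum_pos' (fun k _ => by have := hα k; positivity)
      ⟨⟨p - 1, Nat.sub_lt hp one_pos⟩, Finset.mem_univ _, by positivity⟩
  have hu : perronU p r = (∑ k : Fin p, r ^ (-(k : ℤ)))⁻¹ • fun i : Fin p => r ^ (-(i : ℤ)) := by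
    funext i
    rw [perronU, Pi.smul_apply, smul_eq_mul, div_eq_inv_mul]
  rw [perronV_eq_smul, hu, smul_dotProduct, dotProduct_smul, perronTail_dotProduct_zpow hr.ne',
    smul_eq_mul, smul_eq_mul]
  field_simp

end PerronVectors

section PerronProjection

variable {K ι : Type*} [Field K] [Fintype ι] {A : Matrix ι ι K} {u v : ι → K} {r : K}

theorem sub_vecMulVec_pow_succ [DecidableEq ι] (hr : r ≠ 0) (hu : A *ᵥ u = r • u)
    (hv : v ᵥ* A = r • v) (huv : v ⬝ᵥ u = 1) (n : ℕ) :
    (r⁻¹ • A - vecMulVec u v) ^ (n + 1) = (r⁻¹ • A) ^ (n + 1) - vecMulVec u v := by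
  refine sub_pow_succ_of_mul_eq_of_mul_eq ?_ ?_ ?_ n
  · rw [Matrix.smul_mul, mul_vecMulVec, hu, smul_vecMulVec, smul_smul, inv_mul_cancel₀ hr,
      one_smul]
  · rw [Matrix.mul_smul, vecMulVec_mul, hv, vecMulVec_smul, smul_smul, inv_mul_cancel₀ hr,
      one_smul]
  · rw [IsIdempotentElem, vecMulVec_mul, vecMul_vecMulVec, huv, one_smul]

theorem eigenvector_of_sub_vecMulVec_eigenvector (hr : r ≠ 0) (hv : v ᵥ* A = r • v)
    (huv : v ⬝ᵥ u = 1) {μ : K} (hμ : μ ≠ 0) {x : ι → K}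
    (hx : (r⁻¹ • A - vecMulVec u v) *ᵥ x = μ • x) : v ⬝ᵥ x = 0 ∧ A *ᵥ x = (r * μ) • x := by
  have hvB : v ᵥ* (r⁻¹ • A - vecMulVec u v) = 0 := by
    rw [Matrix.vecMul_sub, Matrix.vecMul_smul, hv, vecMul_vecMulVec, huv, smul_smul,
      inv_mul_cancel₀ hr, one_smul, sub_self]
  have hvx : v ⬝ᵥ x = 0 := by
    have h := congrArg (v ⬝ᵥ ·) hx
    simp only [Matrix.dotProduct_mulVec, hvB, zero_dotProduct, dotProduct_smul, smul_eq_mul] at h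
    exact (mul_eq_zero.mp h.symm).resolve_left hμ
  refine ⟨hvx, ?_⟩
  rw [Matrix.sub_mulVec, vecMulVec_mulVec, hvx, MulOpposite.op_zero, zero_smul, sub_zero,
    Matrix.smul_mulVec] at hx
  rw [mul_smul, ← hx, smul_smul, mul_inv_cancel₀ hr, one_smul]

end PerronProjection

section ResidualSpectrum

variable {p : ℕ} {α : Fin p → ℝ} {r : ℝ}

theorem perronV_dotProduct_geom_ne_zero (hp : 0 < p) (hα : ∀ k, 0 ≤ α k)
    (hαp : 0 < α ⟨p - 1, Nat.sub_lt hp one_pos⟩) (hr : 0 < r) :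
    perronV p α r ⬝ᵥ (fun i : Fin p => r⁻¹ ^ (i : ℕ)) ≠ 0 := by
  intro h
  have huv := perronV_dotProduct_perronU hp hα hαp hr
  rw [perronU_eq_smul, dotProduct_smul, h, smul_zero] at huv
  exact zero_ne_one huv

theorem eq_zero_of_companion_mulVec_eq_smul (hp : 0 < p) (hα : ∀ k, 0 ≤ α k)
    (hαp : 0 < α ⟨p - 1, Nat.sub_lt hp one_pos⟩) (hr : 0 < r) {x : Fin p → ℂ}
    (hx : (companion p α).map Complex.ofReal *ᵥ x = (r : ℂ) • x)
    (hvx : (Complex.ofRealHom ∘ perronV p α r) ⬝ᵥ x = 0) : x = 0 := by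
  have hgeom := companionMatrix_eigenvector_eq_smul (μ := (r : ℂ)) hp (by exact_mod_cast hr.ne')
    (by rwa [← companion_map_ofReal])
  have hgeomc : (fun i : Fin p => (r : ℂ)⁻¹ ^ (i : ℕ)) =
      Complex.ofRealHom ∘ fun i : Fin p => r⁻¹ ^ (i : ℕ) := by
    funext i
    simp
  rw [hgeom, hgeomc, dotProduct_smul, ← RingHom.map_dotProduct, smul_eq_mul] at hvx
  have hx0 : x ⟨0, hp⟩ = 0 := (mul_eq_zero.mp hvx).resolve_right
    (by simpa using perronV_dotProduct_geom_ne_zero hp hα hαp hr)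
  rw [hgeom, hx0, zero_smul]

theorem exists_companion_eigenvector_of_mem_spectrum_map_sub_vecMulVec (hp : 0 < p)
    (hα : ∀ k, 0 ≤ α k) (hαp : 0 < α ⟨p - 1, Nat.sub_lt hp one_pos⟩) (hr : 0 < r)
    (hrα : weightedPowSum α r⁻¹ = 1) {μ : ℂ} (hμ0 : μ ≠ 0)
    (hμ : μ ∈ spectrum ℂ ((r⁻¹ • companion p α - vecMulVec (perronU p r) (perronV p α r)).map
      Complex.ofReal)) :
    ∃ x ≠ 0, (Complex.ofRealHom ∘ perronV p α r) ⬝ᵥ x = 0 ∧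
      (companion p α).map Complex.ofReal *ᵥ x = ((r : ℂ) * μ) • x := by
  set f := Complex.ofRealHom
  have hmap : (r⁻¹ • companion p α - vecMulVec (perronU p r) (perronV p α r)).map f =
      (r : ℂ)⁻¹ • (companion p α).map f - vecMulVec (f ∘ perronU p r) (f ∘ perronV p α r) := by
    ext i j
    simp [f, vecMulVec_apply]
  have hv : (f ∘ perronV p α r) ᵥ* (companion p α).map f = (r : ℂ) • (f ∘ perronV p α r) := by
    funext j
    rw [← RingHom.map_vecMul, perronV_vecMul_companion hp hr.ne' hrα]
    simp [f]
  have huv : (f ∘ perronV p α r) ⬝ᵥ (f ∘ perronU p r) = 1 := by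
    rw [← RingHom.map_dotProduct, perronV_dotProduct_perronU hp hα hαp hr, map_one]
  obtain ⟨x, hx0, hx⟩ := Matrix.mem_spectrum_iff_exists_mulVec_eq_smul.mp (hmap ▸ hμ)
  exact ⟨x, hx0, eigenvector_of_sub_vecMulVec_eigenvector (by exact_mod_cast hr.ne') hv huv hμ0 hx⟩

theorem norm_lt_one_of_mem_spectrum_map_sub_vecMulVec (hp : 0 < p) (hα : ∀ k, 0 ≤ α k)
    (hαp : 0 < α ⟨p - 1, Nat.sub_lt hp one_pos⟩)
    (hgcd : (Finset.univ.filter fun i : Fin p => 0 < α i).gcd (fun i => (i : ℕ) + 1) = 1)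
    (hr : 0 < r) (hrα : weightedPowSum α r⁻¹ = 1) {μ : ℂ}
    (hμ : μ ∈ spectrum ℂ ((r⁻¹ • companion p α - vecMulVec (perronU p r) (perronV p α r)).map
      Complex.ofReal)) : ‖μ‖ < 1 := by
  rcases eq_or_ne μ 0 with rfl | hμ0
  · simp
  obtain ⟨x, hx0, hvx, hAx⟩ :=
    exists_companion_eigenvector_of_mem_spectrum_map_sub_vecMulVec hp hα hαp hr hrα hμ0 hμ
  have hrμ : (r : ℂ) * μ ∈ spectrum ℂ ((companion p α).map Complex.ofReal) :=
    Matrix.mem_spectrum_iff_exists_mulVec_eq_smul.mpr ⟨x, hx0, hAx⟩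
  have hle := norm_le_of_mem_spectrum_companion hp hα hαp hr hrα hrμ
  rw [norm_mul, Complex.norm_real, Real.norm_of_nonneg hr.le] at hle
  refine lt_of_le_of_ne (le_of_mul_le_mul_left (by linarith) hr) fun hμ1 => hx0 ?_
  have hrμr := eq_of_mem_spectrum_companion_of_norm_eq hp hα hαp hgcd hr hrα hrμ
    (by rw [norm_mul, Complex.norm_real, Real.norm_of_nonneg hr.le, hμ1, mul_one])
  rw [hrμr] at hAx
  exact eq_zero_of_companion_mulVec_eq_smul hp hα hαp hr hAx hvx

end ResidualSpectrum

/-- geometric rate of convergence: there are `c > 0` and `0 < ρ₀ < 1` such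
that `‖ρ(A)^{−n} A^n − Π‖ ≤ c ρ₀^n` for all `n`, where `Π = u vᵀ`. -/
theorem normalized_powers_geometric_rate
    (p : ℕ) (hp : 0 < p) (α : Fin p → ℝ)
    (hα : ∀ i, α i ∈ Set.Icc (0 : ℝ) 1)
    (hαp : 0 < α ⟨p - 1, by omega⟩)
    (hgcd : (Finset.univ.filter fun i : Fin p => 0 < α i).gcd
        (fun i => (i : ℕ) + 1) = 1) :
    ∃ c : ℝ, 0 < c ∧ ∃ ρ₀ : ℝ, 0 < ρ₀ ∧ ρ₀ < 1 ∧
      ∀ n : ℕ,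
        opNorm ((specRad (companion p α) ^ n)⁻¹ • (companion p α) ^ n -
            Matrix.vecMulVec (perronU p (specRad (companion p α)))
              (perronV p α (specRad (companion p α))))
          ≤ c * ρ₀ ^ n := by
  have hα0 : ∀ k, 0 ≤ α k := fun k => (hα k).1
  obtain ⟨r, hr, hrα⟩ : ∃ r > 0, weightedPowSum α r⁻¹ = 1 := by
    obtain ⟨t, ht, htα⟩ := exists_pos_weightedPowSum_eq_one hp hα0 hαp
    exact ⟨t⁻¹, inv_pos.mpr ht, by rwa [inv_inv]⟩
  rw [specRad_companion hp hα0 hαp hr hrα]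
  set B := r⁻¹ • companion p α - vecMulVec (perronU p r) (perronV p α r)
  have hpow : ∀ n, (r ^ (n + 1))⁻¹ • companion p α ^ (n + 1) -
      vecMulVec (perronU p r) (perronV p α r) = B ^ (n + 1) := fun n => by
    rw [sub_vecMulVec_pow_succ hr.ne' (companion_mulVec_perronU hp hrα)
      (perronV_vecMul_companion hp hr.ne' hrα) (perronV_dotProduct_perronU hp hα0 hαp hr),
      smul_pow, inv_pow]
  obtain ⟨ρ₀, hρ₀, hρ₀1, hB⟩ := exists_eventually_opNorm_pow_le hp B fun z hz =>
    norm_lt_one_of_mem_spectrum_map_sub_vecMulVec hp hα0 hαp hgcd hr hrα hz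
  refine (exists_pos_forall_le_mul_pow hρ₀ ?_).imp fun c hc => ⟨hc.1, ρ₀, hρ₀, hρ₀1, hc.2⟩
  filter_upwards [hB, eventually_ge_atTop 1] with n hn hn1
  obtain ⟨m, rfl⟩ := Nat.exists_eq_add_of_le' hn1
  rwa [hpow]

end
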